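/- Fix two distinct nodes i ≠ j in V and let A(t) denote the matrix obtained from A by replacing the entries at positions (i,j) and (j,i) by t ≥ 0 (all other entries unchanged). Suppose t₀ > 0 and that at t = t₀ both group volumes are positive: vol(V₀) > 0 and vol(V₁) > 0 (hence vol(G) > 0). Then the function t ↦ H^{P_S}(A(t)) is differentiable at t₀. -/

import Mathlib

open Finset

/-- Degree of a node: sum of edge weights in its row. -/
noncomputable def deg {V : Type*} [Fintype V] (A : V → V → ℝ) (v : V) : ℝ := ∑ u, A v u

/-- Volume of a set of nodes: sum of their degrees. -/
noncomputable def vol {V : Type*} [Fintype V] (A : V → V → ℝ) (W : Finset V) : ℝ :=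
  ∑ v ∈ W, deg A v

/-- Volume of the whole graph. -/
noncomputable def volG {V : Type*} [Fintype V] (A : V → V → ℝ) : ℝ := vol A Finset.univ

/-- Cut weight of a group: total weight of edges with exactly one endpoint inside. -/
noncomputable def cutw {V : Type*} [Fintype V] [DecidableEq V] (A : V → V → ℝ)
    (W : Finset V) : ℝ :=
  ∑ v ∈ W, ∑ u ∈ Wᶜ, A v u

/-- Intra-group (signed) entropy contribution of a group. -/
noncomputable def intraPart {V : Type*} [Fintype V] (A : V → V → ℝ) (W : Finset V) : ℝ :=
  (vol A W / volG A) * ∑ v ∈ W, (deg A v / vol A W) * Real.logb 2 (deg A v / vol A W)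

/-- Two-dimensional structural entropy w.r.t. the sensitive partition `{V0, V1}`. -/
noncomputable def H2SE {V : Type*} [Fintype V] [DecidableEq V] (A : V → V → ℝ)
    (V0 V1 : Finset V) : ℝ :=
  -(intraPart A V0 + intraPart A V1)
    - ((cutw A V0 / volG A) * Real.logb 2 (vol A V0 / volG A)
       + (cutw A V1 / volG A) * Real.logb 2 (vol A V1 / volG A))

/-- The matrix obtained from `A` by replacing the entries at `(i,j)` and `(j,i)` by `t`. -/
noncomputable def updEdge {V : Type*} [DecidableEq V] (A : V → V → ℝ) (i j : V) (t : ℝ) :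
    V → V → ℝ :=
  fun u v => if (u = i ∧ v = j) ∨ (u = j ∧ v = i) then t else A u v

/-!
Every entry of `A(t)` is affine in `t`, hence so are all degrees, volumes and cut weights, and
the entropy is built from these by quotients and `x ↦ log x`. The only possible obstruction is
a node of degree `0` at `t₀`, where `x log x` is not differentiable; but such a node is neither
`i` nor `j` (their degrees are at least `t₀ > 0`), so its degree is `0` for every `t` and its
term vanishes identically.
-/

lemma DifferentiableAt.logb {f : ℝ → ℝ} {x : ℝ} (b : ℝ) (hf : DifferentiableAt ℝ f x)
    (hx : f x ≠ 0) : DifferentiableAt ℝ (fun t => Real.logb b (f t)) x :=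
  (hf.log hx).div_const _

section Nonneg

variable {V : Type*} [Fintype V] {A : V → V → ℝ}

lemma deg_nonneg (hA : ∀ u v, 0 ≤ A u v) (v : V) : 0 ≤ deg A v :=
  sum_nonneg fun u _ => hA v u

lemma vol_le_volG (hA : ∀ u v, 0 ≤ A u v) (W : Finset V) : vol A W ≤ volG A :=
  sum_le_sum_of_subset_of_nonneg (subset_univ W) fun v _ _ => deg_nonneg hA v

end Nonneg

section Family

variable {V : Type*} [Fintype V] {A : ℝ → V → V → ℝ}
  (hA : ∀ u v, Differentiable ℝ fun t => A t u v)
include hA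

lemma differentiable_deg (v : V) : Differentiable ℝ fun t => deg (A t) v :=
  Differentiable.fun_sum fun u _ => hA v u

lemma differentiable_vol (W : Finset V) : Differentiable ℝ fun t => vol (A t) W :=
  Differentiable.fun_sum fun v _ => differentiable_deg hA v

lemma differentiable_volG : Differentiable ℝ fun t => volG (A t) :=
  differentiable_vol hA univ

lemma differentiable_cutw [DecidableEq V] (W : Finset V) :
    Differentiable ℝ fun t => cutw (A t) W :=
  Differentiable.fun_sum fun v _ => Differentiable.fun_sum fun u _ => hA v u

lemma differentiableAt_intraPart {W : Finset V} {t₀ : ℝ} (hW : vol (A t₀) W ≠ 0)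
    (hG : volG (A t₀) ≠ 0) (hdeg : ∀ v, deg (A t₀) v = 0 → ∀ t, deg (A t) v = 0) :
    DifferentiableAt ℝ (fun t => intraPart (A t) W) t₀ := by
  unfold intraPart
  refine ((differentiable_vol hA W t₀).div (differentiable_volG hA t₀) hG).mul
    (.fun_sum fun v _ => ?_)
  by_cases hv : deg (A t₀) v = 0
  · simp only [hdeg v hv, zero_div, zero_mul]
    exact differentiableAt_const 0
  · have hratio := (differentiable_deg hA v t₀).div (differentiable_vol hA W t₀) hW
    exact hratio.mul (hratio.logb 2 (div_ne_zero hv hW))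

lemma differentiableAt_H2SE [DecidableEq V] {V0 V1 : Finset V} {t₀ : ℝ}
    (h0 : vol (A t₀) V0 ≠ 0) (h1 : vol (A t₀) V1 ≠ 0) (hG : volG (A t₀) ≠ 0)
    (hdeg : ∀ v, deg (A t₀) v = 0 → ∀ t, deg (A t) v = 0) :
    DifferentiableAt ℝ (fun t => H2SE (A t) V0 V1) t₀ := by
  have hcut (W : Finset V) (hW : vol (A t₀) W ≠ 0) : DifferentiableAt ℝ
      (fun t => cutw (A t) W / volG (A t) * Real.logb 2 (vol (A t) W / volG (A t))) t₀ :=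
    ((differentiable_cutw hA W t₀).div (differentiable_volG hA t₀) hG).mul
      (((differentiable_vol hA W t₀).div (differentiable_volG hA t₀) hG).logb 2
        (div_ne_zero hW hG))
  exact ((differentiableAt_intraPart hA h0 hG hdeg).add
    (differentiableAt_intraPart hA h1 hG hdeg)).neg.sub ((hcut V0 h0).add (hcut V1 h1))

end Family

section UpdEdge

variable {V : Type*} [DecidableEq V] (i j : V)

lemma differentiable_updEdge_apply (A : V → V → ℝ) (u v : V) :
    Differentiable ℝ fun t => updEdge A i j t u v := by
  unfold updEdge
  split_ifs
  · exact differentiable_id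
  · exact differentiable_const _

lemma updEdge_nonneg {A : V → V → ℝ} (hA : ∀ u v, 0 ≤ A u v) {t : ℝ} (ht : 0 ≤ t)
    (u v : V) :
    0 ≤ updEdge A i j t u v := by
  unfold updEdge
  split_ifs
  exacts [ht, hA u v]

lemma deg_updEdge_of_ne [Fintype V] (A : V → V → ℝ) {v : V} (hi : v ≠ i) (hj : v ≠ j)
    (t : ℝ) : deg (updEdge A i j t) v = deg A v :=
  sum_congr rfl fun u _ => by simp [updEdge, hi, hj]

lemma le_deg_updEdge [Fintype V] {A : V → V → ℝ} (hA : ∀ u v, 0 ≤ A u v) {t : ℝ}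
    (ht : 0 ≤ t) {v : V} (hv : v = i ∨ v = j) : t ≤ deg (updEdge A i j t) v := by
  obtain ⟨w, hw⟩ : ∃ w, updEdge A i j t v w = t := by
    rcases hv with rfl | rfl
    exacts [⟨j, by simp [updEdge]⟩, ⟨i, by simp [updEdge]⟩]
  have hle := single_le_sum (fun u _ => updEdge_nonneg i j hA ht v u) (mem_univ w)
  rwa [hw] at hle

lemma deg_updEdge_eq_zero [Fintype V] {A : V → V → ℝ} (hA : ∀ u v, 0 ≤ A u v) {t₀ : ℝ}
    (ht₀ : 0 < t₀) {v : V} (hv : deg (updEdge A i j t₀) v = 0) (t : ℝ) :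
    deg (updEdge A i j t) v = 0 := by
  have hi : v ≠ i := by
    rintro rfl
    linarith [le_deg_updEdge v j hA ht₀.le (.inl rfl)]
  have hj : v ≠ j := by
    rintro rfl
    linarith [le_deg_updEdge i v hA ht₀.le (.inr rfl)]
  rw [deg_updEdge_of_ne i j A hi hj] at hv ⊢
  exact hv

end UpdEdge

theorem stmt0_general {V : Type*} [Fintype V] [DecidableEq V] (A : V → V → ℝ)
    (hnn : ∀ u v, 0 ≤ A u v)
    (V0 V1 : Finset V)
    (i j : V) (t₀ : ℝ) (ht₀ : 0 < t₀)
    (hv0 : 0 < vol (updEdge A i j t₀) V0) (hv1 : 0 < vol (updEdge A i j t₀) V1) :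
    DifferentiableAt ℝ (fun t => H2SE (updEdge A i j t) V0 V1) t₀ := by
  have hG : 0 < volG (updEdge A i j t₀) :=
    hv0.trans_le (vol_le_volG (updEdge_nonneg i j hnn ht₀.le) V0)
  exact differentiableAt_H2SE (differentiable_updEdge_apply i j A) hv0.ne' hv1.ne' hG.ne'
    fun _ hv => deg_updEdge_eq_zero i j hnn ht₀ hv

/-- the map `t ↦ H^{P_S}(A(t))` is differentiable at `t₀`. -/
theorem stmt0 {V : Type*} [Fintype V] [DecidableEq V] (A : V → V → ℝ)
    (hsym : ∀ u v, A u v = A v u) (hnn : ∀ u v, 0 ≤ A u v)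
    (V0 V1 : Finset V) (hpart : V1 = V0ᶜ)
    (i j : V) (hij : i ≠ j) (t₀ : ℝ) (ht₀ : 0 < t₀)
    (hv0 : 0 < vol (updEdge A i j t₀) V0) (hv1 : 0 < vol (updEdge A i j t₀) V1) :
    DifferentiableAt ℝ (fun t => H2SE (updEdge A i j t) V0 V1) t₀ :=
  stmt0_general A hnn V0 V1 i j t₀ ht₀ hv0 hv1
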